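/- arXiv:1308.0409 — 6 statements merged into one kernel-verified Lean document; each statement's English description precedes it below -/
import Mathlib

section
/- The subgroup of S₆ generated by (1 2 3) and (4 5 6) is a normal subgroup of the group G₃ generated by (1 2 3), (1 4)(2 5)(3 6), and (1 2)(4 5), and the quotient is isomorphic to the Klein four-group C₂ × C₂. -/
/-!
Read `Fin 6` as `ZMod 2 × ZMod 3` through `p ↦ (block p, coord p)`. Every generator of `G₃`
acts as `(b, c) ↦ (b + β, ε c + γ_b)` with `β ∈ ZMod 2` and `ε = ±1`. Such maps form a group
on which `σ ↦ (β, ε)` is a homomorphism onto `C₂ × C₂`. Its kernel consists of the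
translations `(b, c) ↦ (b, c + γ_b)`, which are exactly the elements of `N`, and it stays
onto on `G₃`, since the block swap and `(1 2)(4 5)` map to the two generators of `C₂ × C₂`.
-/

open Equiv

theorem QuotientGroup.exists_normal_subgroupOf_quotient_mulEquiv {G Q : Type*} [Group G]
    [Group Q] {N H : Subgroup G} (φ : H →* Q) (hφ : Function.Surjective φ)
    (hker : N.subgroupOf H = φ.ker) :
    ∃ hn : (N.subgroupOf H).Normal,
      letI := hn
      Nonempty (H ⧸ N.subgroupOf H ≃* Q) :=
  haveI : (N.subgroupOf H).Normal := hker ▸ φ.normal_ker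
  ⟨this, ⟨(QuotientGroup.quotientMulEquivOfEq hker).trans
    (QuotientGroup.quotientKerEquivOfSurjective φ hφ)⟩⟩

namespace BlockAffine

def block (p : Fin 6) : ZMod 2 := if p.val < 3 then 0 else 1

def coord (p : Fin 6) : ZMod 3 := p.val

theorem eq_of_block_eq_of_coord_eq :
    ∀ p q : Fin 6, block p = block q → coord p = coord q → p = q := by
  decide

def blockShift (σ : Perm (Fin 6)) : ZMod 2 := block (σ 0)

def slope (σ : Perm (Fin 6)) : ZMod 3 := coord (σ 1) - coord (σ 0)

structure IsBlockAffine (σ : Perm (Fin 6)) : Prop where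
  block_apply : ∀ p, block (σ p) = block p + blockShift σ
  coord_sub : ∀ p q, block p = block q →
    coord (σ p) - coord (σ q) = slope σ * (coord p - coord q)

namespace IsBlockAffine

variable {σ τ : Perm (Fin 6)}

theorem one : IsBlockAffine 1 := ⟨by decide, by decide⟩

theorem block_apply_one_eq (hσ : IsBlockAffine σ) : block (σ 1) = block (σ 0) := by
  rw [hσ.block_apply, hσ.block_apply]; rfl

theorem slope_ne_zero (hσ : IsBlockAffine σ) : slope σ ≠ 0 := fun h =>
  absurd (σ.injective (eq_of_block_eq_of_coord_eq _ _ hσ.block_apply_one_eq (sub_eq_zero.mp h)))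
    (by decide)

theorem blockShift_mul (hσ : IsBlockAffine σ) :
    blockShift (σ * τ) = blockShift σ + blockShift τ :=
  (hσ.block_apply (τ 0)).trans (add_comm _ _)

theorem slope_mul (hσ : IsBlockAffine σ) (hτ : IsBlockAffine τ) :
    slope (σ * τ) = slope σ * slope τ :=
  hσ.coord_sub _ _ hτ.block_apply_one_eq

theorem mul (hσ : IsBlockAffine σ) (hτ : IsBlockAffine τ) : IsBlockAffine (σ * τ) where
  block_apply p := by
    rw [Perm.mul_apply, hσ.block_apply, hτ.block_apply, hσ.blockShift_mul]
    ring
  coord_sub p q hpq := by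
    have hblock : block (τ p) = block (τ q) := by rw [hτ.block_apply, hτ.block_apply, hpq]
    rw [Perm.mul_apply, Perm.mul_apply, hσ.coord_sub _ _ hblock, hτ.coord_sub _ _ hpq,
      hσ.slope_mul hτ, mul_assoc]

theorem inv (hσ : IsBlockAffine σ) : IsBlockAffine σ⁻¹ := by
  have hblock (p : Fin 6) : block (σ⁻¹ p) = block p - blockShift σ := by
    simpa using congrArg (· - blockShift σ) (hσ.block_apply (σ⁻¹ p)).symm
  have hcoord (p q : Fin 6) (hpq : block p = block q) :
      coord p - coord q = slope σ * (coord (σ⁻¹ p) - coord (σ⁻¹ q)) := by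
    simpa using hσ.coord_sub (σ⁻¹ p) (σ⁻¹ q) (by rw [hblock, hblock, hpq])
  have hslope : slope σ * slope σ⁻¹ = 1 := (hcoord 1 0 rfl).symm
  refine ⟨fun p => ?_, fun p q hpq => ?_⟩
  · rw [blockShift, hblock, hblock, show block 0 = 0 from rfl]
    ring
  · linear_combination
      (-slope σ⁻¹) * hcoord p q hpq - (coord (σ⁻¹ p) - coord (σ⁻¹ q)) * hslope

end IsBlockAffine

def blockAffine : Subgroup (Perm (Fin 6)) where
  carrier := {σ | IsBlockAffine σ}
  one_mem' := .one
  mul_mem' := .mul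
  inv_mem' := .inv

def slopeParity (z : ZMod 3) : ZMod 2 := if z = 1 then 0 else 1

theorem slopeParity_mul : ∀ {z w : ZMod 3}, z ≠ 0 → w ≠ 0 →
    slopeParity (z * w) = slopeParity z + slopeParity w := by
  decide

theorem slopeParity_eq_zero : ∀ {z : ZMod 3}, slopeParity z = 0 ↔ z = 1 := by
  decide

def character : blockAffine →* Multiplicative (ZMod 2) × Multiplicative (ZMod 2) where
  toFun σ := (.ofAdd (blockShift σ), .ofAdd (slopeParity (slope σ)))
  map_one' := rfl
  map_mul' σ τ := by
    have hσ : IsBlockAffine σ := σ.2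
    have hτ : IsBlockAffine τ := τ.2
    ext
    · exact hσ.blockShift_mul
    · exact (congrArg slopeParity (hσ.slope_mul hτ)).trans
        (slopeParity_mul hσ.slope_ne_zero hτ.slope_ne_zero)

def translation (a b : ZMod 3) : Perm (Fin 6) := c[0, 1, 2] ^ a.val * c[3, 4, 5] ^ b.val

theorem translation_apply : ∀ (a b : ZMod 3) (p : Fin 6),
    block (translation a b p) = block p ∧
      coord (translation a b p) = coord p + if block p = 0 then a else b := by
  decide

theorem IsBlockAffine.eq_translation {g : Perm (Fin 6)} (hg : IsBlockAffine g)
    (hshift : blockShift g = 0) (hslope : slope g = 1) :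
    g = translation (coord (g 0)) (coord (g 3)) := by
  ext1 p
  refine eq_of_block_eq_of_coord_eq _ _ ?_ ?_
  · rw [hg.block_apply, hshift, add_zero, (translation_apply ..).1]
  · have hanchor (r : Fin 6) (hr : block p = block r) (h0 : coord r = 0) :
        coord (g p) = coord p + coord (g r) := by
      linear_combination hg.coord_sub p r hr + (coord p - coord r) * hslope - h0
    rw [(translation_apply ..).2]
    rcases (by decide : ∀ z : ZMod 2, z = 0 ∨ z = 1) (block p) with h | h
    · rw [if_pos h]
      exact hanchor 0 h rfl
    · rw [if_neg (by rw [h]; decide)]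
      exact hanchor 3 h rfl

def translationSubgroup : Subgroup (Perm (Fin 6)) := Subgroup.closure {c[0, 1, 2], c[3, 4, 5]}

theorem translation_mem (a b : ZMod 3) : translation a b ∈ translationSubgroup :=
  mul_mem (pow_mem (Subgroup.subset_closure (by simp)) _)
    (pow_mem (Subgroup.subset_closure (by simp)) _)

theorem translationSubgroup_eq_map_ker :
    translationSubgroup = character.ker.map blockAffine.subtype := by
  refine le_antisymm ((Subgroup.closure_le _).2 ?_) ?_
  · rintro g (rfl | rfl)
    exacts [⟨⟨c[0, 1, 2], by decide, by decide⟩, MonoidHom.mem_ker.2 rfl, rfl⟩,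
      ⟨⟨c[3, 4, 5], by decide, by decide⟩, MonoidHom.mem_ker.2 rfl, rfl⟩]
  · rintro _ ⟨⟨g, hg⟩, hker, rfl⟩
    have hg : IsBlockAffine g := hg
    obtain ⟨hshift, hslope⟩ := Prod.ext_iff.1 hker
    show g ∈ translationSubgroup
    rw [hg.eq_translation (ofAdd_eq_one.1 hshift) (slopeParity_eq_zero.1 (ofAdd_eq_one.1 hslope))]
    exact translation_mem _ _

def G₃ : Subgroup (Perm (Fin 6)) :=
  Subgroup.closure {c[0, 1, 2], c[0, 3] * c[1, 4] * c[2, 5], c[0, 1] * c[3, 4]}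

theorem G₃_le_blockAffine : G₃ ≤ blockAffine := by
  refine (Subgroup.closure_le _).2 ?_
  rintro g (rfl | rfl | rfl)
  exacts [⟨by decide, by decide⟩, ⟨by decide, by decide⟩, ⟨by decide, by decide⟩]

theorem character_comp_inclusion_surjective :
    Function.Surjective (character.comp (Subgroup.inclusion G₃_le_blockAffine)) := by
  have hswap : c[0, 3] * c[1, 4] * c[2, 5] ∈ G₃ := Subgroup.subset_closure (by simp)
  have hreflect : c[0, 1] * c[3, 4] ∈ G₃ := Subgroup.subset_closure (by simp)
  have hvalues : ∀ k : Multiplicative (ZMod 2) × Multiplicative (ZMod 2),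
      ∃ g ∈ [1, c[0, 3] * c[1, 4] * c[2, 5], c[0, 1] * c[3, 4],
        c[0, 3] * c[1, 4] * c[2, 5] * (c[0, 1] * c[3, 4])],
      (Multiplicative.ofAdd (blockShift g), Multiplicative.ofAdd (slopeParity (slope g))) = k := by
    decide
  intro k
  obtain ⟨g, hg, rfl⟩ := hvalues k
  refine ⟨⟨g, ?_⟩, rfl⟩
  simp only [List.mem_cons, List.not_mem_nil, or_false] at hg
  rcases hg with rfl | rfl | rfl | rfl
  exacts [one_mem _, hswap, hreflect, mul_mem hswap hreflect]

theorem translationSubgroup_subgroupOf_G₃ :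
    translationSubgroup.subgroupOf G₃ =
      (character.comp (Subgroup.inclusion G₃_le_blockAffine)).ker := by
  ext g
  rw [Subgroup.mem_subgroupOf, translationSubgroup_eq_map_ker, MonoidHom.mem_ker,
    MonoidHom.comp_apply, ← MonoidHom.mem_ker]
  exact Subgroup.mem_map_iff_mem (x := Subgroup.inclusion G₃_le_blockAffine g)
    Subtype.val_injective

end BlockAffine

theorem N_normal_in_G3_quotient_klein :
    letI N : Subgroup (Equiv.Perm (Fin 6)) := Subgroup.closure {c[0, 1, 2], c[3, 4, 5]}
    letI G₃ : Subgroup (Equiv.Perm (Fin 6)) :=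
      Subgroup.closure {c[0, 1, 2], c[0, 3] * c[1, 4] * c[2, 5], c[0, 1] * c[3, 4]}
    ∃ hn : (N.subgroupOf G₃).Normal,
      letI := hn
      Nonempty ((G₃ ⧸ N.subgroupOf G₃) ≃*
        (Multiplicative (ZMod 2) × Multiplicative (ZMod 2))) :=
  QuotientGroup.exists_normal_subgroupOf_quotient_mulEquiv _
    BlockAffine.character_comp_inclusion_surjective BlockAffine.translationSubgroup_subgroupOf_G₃
end

section
/- The group G₂ = ⟨(1 2 3), (1 4 2 5)(3 6)⟩ ≤ S₆ equals the intersection of the group G₁ = ⟨(1 2 3), (1 4)(2 5)(3 6), (1 2)⟩ with the alternating group A₆. -/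
open Equiv Equiv.Perm Subgroup in
theorem G2_eq_G1_inter_A6 :
    Subgroup.closure {(c[0, 1, 2] : Equiv.Perm (Fin 6)), c[0, 3, 1, 4] * c[2, 5]} =
      Subgroup.closure {(c[0, 1, 2] : Equiv.Perm (Fin 6)),
        c[0, 3] * c[1, 4] * c[2, 5], c[0, 1]} ⊓ alternatingGroup (Fin 6) := by
  set a : Perm (Fin 6) := c[0,1,2] with ha
  set b : Perm (Fin 6) := c[0,3,1,4] * c[2,5] with hb
  set t : Perm (Fin 6) := c[0,3] * c[1,4] * c[2,5] with ht
  set x : Perm (Fin 6) := c[0,1] with hx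
  have hxx : x * x = 1 := by decide
  have htxb : t = x * b := by decide
  have hxax : x * a * x = a⁻¹ := by decide
  have hxbx : x * b * x = b⁻¹ := by decide
  have hsa : Perm.sign a = 1 := by decide
  have hsb : Perm.sign b = 1 := by decide
  have hsx : Perm.sign x = -1 := by decide
  set N : Subgroup (Perm (Fin 6)) := Subgroup.closure {a, b} with hN
  have haN : a ∈ N := subset_closure (by simp)
  have hbN : b ∈ N := subset_closure (by simp)
  -- conjugation by x preserves N
  have hconj : ∀ n ∈ N, x * n * x ∈ N := by
    intro n hn
    induction hn using Subgroup.closure_induction with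
    | mem g hg =>
      rcases hg with rfl | rfl
      · rw [hxax]; exact inv_mem haN
      · rw [hxbx]; exact inv_mem hbN
    | one => rw [mul_one, hxx]; exact one_mem N
    | mul g h hg hh ihg ihh =>
      have : x * (g * h) * x = (x * g * x) * (x * h * x) := by
        rw [show (x * g * x) * (x * h * x) = x * g * (x * x) * h * x by group, hxx]
        group
      rw [this]; exact mul_mem ihg ihh
    | inv g hg ih =>
      have : x * g⁻¹ * x = (x * g * x)⁻¹ := by
        rw [mul_inv_rev, mul_inv_rev]
        have hxi : x⁻¹ = x := by rw [inv_eq_iff_mul_eq_one, hxx]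
        rw [hxi]; group
      rw [this]; exact inv_mem ih
  -- N ≤ A₆
  have hNA : N ≤ alternatingGroup (Fin 6) := by
    rw [hN, Subgroup.closure_le]
    rintro g (rfl | rfl)
    · exact Perm.mem_alternatingGroup.2 hsa
    · exact Perm.mem_alternatingGroup.2 hsb
  -- the subgroup N ∪ xN
  set M : Subgroup (Perm (Fin 6)) :=
    { carrier := {g | g ∈ N ∨ x * g ∈ N}
      one_mem' := Or.inl (one_mem N)
      mul_mem' := by
        rintro g h (hg | hg) (hh | hh)
        · exact Or.inl (mul_mem hg hh)
        · refine Or.inr ?_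
          have : x * (g * h) = (x * g * x) * (x * h) := by
            rw [show (x * g * x) * (x * h) = x * g * (x * x) * h by group, hxx]; group
          rw [this]; exact mul_mem (hconj g hg) hh
        · refine Or.inr ?_
          have : x * (g * h) = (x * g) * h := by group
          rw [this]; exact mul_mem hg hh
        · refine Or.inl ?_
          have : g * h = (x * (x * g) * x) * (x * h) := by
            rw [show (x * (x * g) * x) * (x * h) = x * x * g * (x * x) * h by group, hxx]
            group
          rw [this]; exact mul_mem (hconj _ hg) hh
      inv_mem' := by
        rintro g (hg | hg)
        · exact Or.inl (inv_mem hg)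
        · refine Or.inr ?_
          have key : (x * g⁻¹) * (x * (x * g) * x) = 1 := by
            rw [show (x * g⁻¹) * (x * (x * g) * x) = x * g⁻¹ * (x * x) * g * x by group,
              hxx, show x * g⁻¹ * 1 * g * x = x * (g⁻¹ * g) * x by group, inv_mul_cancel,
              show x * 1 * x = x * x by group, hxx]
          rw [eq_inv_of_mul_eq_one_left key]
          exact inv_mem (hconj _ hg)
      } with hM
  -- G₁ ≤ M
  have hG1M : Subgroup.closure {a, t, x} ≤ M := by
    rw [Subgroup.closure_le]
    rintro g (rfl | rfl | rfl)
    · exact Or.inl haN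
    · refine Or.inr ?_
      rw [htxb, show x * (x * b) = (x * x) * b by group, hxx, one_mul]
      exact hbN
    · refine Or.inr ?_
      rw [hxx]; exact one_mem N
  apply le_antisymm
  · rw [Subgroup.closure_le]
    rintro g (rfl | rfl)
    · exact ⟨subset_closure (by simp), Perm.mem_alternatingGroup.2 hsa⟩
    · refine ⟨?_, Perm.mem_alternatingGroup.2 hsb⟩
      have hbxt : b = x * t := by rw [htxb, show x * (x * b) = (x * x) * b by group, hxx, one_mul]
      rw [hbxt]
      exact mul_mem (subset_closure (by simp)) (subset_closure (by simp))
  · rintro g ⟨hg1, hg2⟩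
    rcases hG1M hg1 with h | h
    · exact h
    · exfalso
      have h1 : Perm.sign (x * g) = 1 := Perm.mem_alternatingGroup.1 (hNA h)
      have h2 : Perm.sign g = 1 := Perm.mem_alternatingGroup.1 hg2
      rw [map_mul, hsx, h2] at h1
      exact absurd h1 (by decide)
end

section
/- Let K be a field and let the involution τ act on the rational function field K(y₁,...,y₆) by swapping y₁ ↔ y₄, y₂ ↔ y₅, y₃ ↔ y₆. Then the fixed field K(y₁,...,y₆)^{⟨τ⟩} equals K(z₁,...,z₆), where z₁ = y₁+y₄, z₂ = y₂+y₅, z₃ = y₃+y₆, z₄ = y₁y₄, z₅ = y₁y₅+y₄y₂, z₆ = y₁y₆+y₄y₃. This holds for fields of any characteristic, including characteristic 2. -/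
/-!
The generators `zᵢ` are `τ`-invariant, so `L := K(z₁, …, z₆)` lies in the fixed field.
Conversely `y₁` is a root of `X² - z₁X + z₄` over `L`, and `L(y₁)` is the whole field:
`y₄ = z₁ - y₁`, and `y₂, y₅` (resp. `y₃, y₆`) solve a linear system over `L(y₁)` with
determinant `y₄ - y₁ ≠ 0`. Hence `[K(y) : L] = 2`, and the fixed field, lying between `L`
and `K(y)` and missing `y₁`, is `L`.
-/

open Polynomial IntermediateField

theorem mem_and_mem_of_add_mem_of_mul_add_mul_mem {E S : Type*} [Field E] [SetLike S E]
    [SubfieldClass S E] {M : S} {x w u v : E} (hxw : x ≠ w) (hx : x ∈ M) (hw : w ∈ M)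
    (huv : u + v ∈ M) (h : x * v + w * u ∈ M) : u ∈ M ∧ v ∈ M := by
  have hu : u = (x * v + w * u - x * (u + v)) / (w - x) := by
    rw [eq_div_iff (sub_ne_zero.mpr hxw.symm)]
    ring
  have hu_mem : u ∈ M := hu ▸ div_mem (sub_mem h (mul_mem hx huv)) (sub_mem hw hx)
  exact ⟨hu_mem, by simpa using sub_mem huv hu_mem⟩

theorem forall_mem_of_swap_invariants_mem {E S : Type*} [Field E] [SetLike S E]
    [SubfieldClass S E] {M : S} {y : Fin 6 → E} (h03 : y 0 ≠ y 3) (hy0 : y 0 ∈ M)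
    (hz : ∀ z ∈ ({y 0 + y 3, y 1 + y 4, y 2 + y 5, y 0 * y 3, y 0 * y 4 + y 3 * y 1,
      y 0 * y 5 + y 3 * y 2} : Set E), z ∈ M) (i : Fin 6) : y i ∈ M := by
  have hy3 : y 3 ∈ M := by simpa using sub_mem (hz (y 0 + y 3) (by simp)) hy0
  obtain ⟨hy1, hy4⟩ := mem_and_mem_of_add_mem_of_mul_add_mul_mem h03 hy0 hy3
    (hz (y 1 + y 4) (by simp)) (hz (y 0 * y 4 + y 3 * y 1) (by simp))
  obtain ⟨hy2, hy5⟩ := mem_and_mem_of_add_mem_of_mul_add_mul_mem h03 hy0 hy3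
    (hz (y 2 + y 5) (by simp)) (hz (y 0 * y 5 + y 3 * y 2) (by simp))
  fin_cases i <;> assumption

namespace IntermediateField

variable {K E : Type*} [Field K] [Field E] [Algebra K E]

theorem adjoin_algebraMap_image_eq_top {A : Type*} [CommRing A] [Algebra K A] [Algebra A E]
    [IsScalarTower K A E] [IsFractionRing A E] {s : Set A} (hs : Algebra.adjoin K s = ⊤) :
    adjoin K (algebraMap A E '' s) = ⊤ := by
  have hA : ∀ a : A, algebraMap A E a ∈ adjoin K (algebraMap A E '' s) := by
    intro a
    apply algebra_adjoin_le_adjoin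
    rw [← IsScalarTower.coe_toAlgHom' K A E, Algebra.adjoin_image, hs]
    exact Subalgebra.mem_map.mpr ⟨a, Algebra.mem_top, rfl⟩
  rw [eq_top_iff]
  rintro x -
  obtain ⟨a, b, -, rfl⟩ := IsFractionRing.div_surjective (A := A) x
  exact div_mem (hA a) (hA b)

theorem mem_fixedField_closure_singleton_iff {σ : E ≃ₐ[K] E} {x : E} :
    x ∈ fixedField (Subgroup.closure {σ}) ↔ σ x = x := by
  rw [← Subgroup.zpowers_eq_closure, mem_fixedField_iff]
  refine ⟨fun h => h σ (Subgroup.mem_zpowers σ), ?_⟩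
  rintro h _ ⟨n, rfl⟩
  exact MulAction.mem_fixedBy_zpow (g := σ) h n

theorem finrank_adjoin_simple_eq_two {L : IntermediateField K E} {x : E} {p : L[X]} (hp : p ≠ 0)
    (hdeg : p.natDegree ≤ 2) (hx : aeval x p = 0) (hxL : x ∉ L) :
    Module.finrank L L⟮x⟯ = 2 := by
  have hint : IsIntegral L x := IsAlgebraic.isIntegral ⟨p, hp, hx⟩
  rw [adjoin.finrank hint]
  have hle : (minpoly L x).natDegree ≤ 2 :=
    (natDegree_le_natDegree (minpoly.degree_le_of_ne_zero L x hp hx)).trans hdeg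
  have hne : (minpoly L x).natDegree ≠ 1 := fun h =>
    hxL (by obtain ⟨a, rfl⟩ := minpoly.natDegree_eq_one_iff.mp h; exact a.2)
  have := minpoly.natDegree_pos hint
  omega

theorem finrank_adjoin_simple_eq_two_of_add_mem_of_mul_mem {L : IntermediateField K E}
    {x w : E} (hadd : x + w ∈ L) (hmul : x * w ∈ L) (hxL : x ∉ L) :
    Module.finrank L L⟮x⟯ = 2 := by
  have hquad : aeval x (X ^ 2 - C ⟨_, hadd⟩ * X + C ⟨_, hmul⟩ : L[X]) = 0 := by
    simp only [map_add, map_sub, map_mul, map_pow, aeval_X, aeval_C, algebraMap_apply]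
    ring
  exact finrank_adjoin_simple_eq_two (Monic.ne_zero (by monicity!)) (by compute_degree!) hquad hxL

theorem eq_of_le_of_ne_top_of_finrank_eq_two {L M : IntermediateField K E}
    (h2 : Module.finrank L E = 2) (hLM : L ≤ M) (hM : M ≠ ⊤) : M = L := by
  have := isSimpleOrder_of_finrank_prime L E (h2 ▸ Nat.prime_two)
  rcases eq_bot_or_eq_top (extendScalars hLM) with h | h
  · rw [← extendScalars_restrictScalars hLM, h, restrictScalars_bot_eq_self]
  · exact absurd (by rw [← extendScalars_restrictScalars hLM, h, restrictScalars_top]) hM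

end IntermediateField

/-- For the involution `τ` of `K(y₁,…,y₆)` swapping `yᵢ ↔ y_{i+3}`, the fixed field is
`K(y₁+y₄, y₂+y₅, y₃+y₆, y₁y₄, y₁y₅+y₄y₂, y₁y₆+y₄y₃)`, over any field `K`. -/
theorem fixed_field_of_swap_involution (K : Type*) [Field K]
    (τ : FractionRing (MvPolynomial (Fin 6) K) ≃ₐ[K] FractionRing (MvPolynomial (Fin 6) K)) :
    letI R := MvPolynomial (Fin 6) K
    letI F := FractionRing R
    letI Y : Fin 6 → F := fun i => algebraMap R F (MvPolynomial.X i)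
    (τ (Y 0) = Y 3) → (τ (Y 3) = Y 0) → (τ (Y 1) = Y 4) → (τ (Y 4) = Y 1) →
    (τ (Y 2) = Y 5) → (τ (Y 5) = Y 2) →
    IntermediateField.fixedField (Subgroup.closure {τ}) =
      IntermediateField.adjoin K
        {Y 0 + Y 3, Y 1 + Y 4, Y 2 + Y 5,
         Y 0 * Y 3, Y 0 * Y 4 + Y 3 * Y 1, Y 0 * Y 5 + Y 3 * Y 2} := by
  intro h03 h30 h14 h41 h25 h52
  set F := FractionRing (MvPolynomial (Fin 6) K)
  set Y : Fin 6 → F := fun i => algebraMap (MvPolynomial (Fin 6) K) F (MvPolynomial.X i)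
  set S : Set F := {Y 0 + Y 3, Y 1 + Y 4, Y 2 + Y 5,
    Y 0 * Y 3, Y 0 * Y 4 + Y 3 * Y 1, Y 0 * Y 5 + Y 3 * Y 2}
  have hY03 : Y 0 ≠ Y 3 := fun h => by
    simpa using MvPolynomial.X_injective (IsFractionRing.injective _ F h)
  have hS_fixed : adjoin K S ≤ fixedField (Subgroup.closure {τ}) := by
    rw [adjoin_le_iff]
    rintro _ (rfl | rfl | rfl | rfl | rfl | rfl) <;>
      rw [SetLike.mem_coe, mem_fixedField_closure_singleton_iff] <;>
      simp only [map_add, map_mul, h03, h30, h14, h41, h25, h52] <;> ring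
  have hY0_not_fixed : Y 0 ∉ fixedField (Subgroup.closure {τ}) := by
    rw [mem_fixedField_closure_singleton_iff, h03]
    exact hY03.symm
  have hgen : adjoin (adjoin K S) {Y 0} = ⊤ := by
    apply restrictScalars_injective K
    rw [adjoin_adjoin_left, restrictScalars_top, eq_top_iff,
      ← adjoin_algebraMap_image_eq_top (MvPolynomial.adjoin_range_X (σ := Fin 6) (R := K)),
      adjoin_le_iff]
    rintro _ ⟨_, ⟨i, rfl⟩, rfl⟩
    exact forall_mem_of_swap_invariants_mem hY03 (subset_adjoin K _ (Or.inr rfl))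
      (fun z hz => subset_adjoin K _ (Or.inl hz)) i
  have h2 : Module.finrank (adjoin K S) F = 2 := by
    rw [← finrank_top', ← hgen]
    exact finrank_adjoin_simple_eq_two_of_add_mem_of_mul_mem (w := Y 3)
      (subset_adjoin K S (by simp [S])) (subset_adjoin K S (by simp [S]))
      fun h => hY0_not_fixed (hS_fixed h)
  exact eq_of_le_of_ne_top_of_finrank_eq_two h2 hS_fixed
    fun h => hY0_not_fixed (h ▸ mem_top)
end

section
/- Let K be a field of characteristic 3, and let σ be the K-automorphism of K(y₁,y₂,y₃) with σ(y₁)=y₁, σ(y₂)=y₂+y₁, σ(y₃)=y₃+y₂. Setting z₁ = y₁, θ = y₂/y₁, z₂ = θ³ − θ, and z₃ = y₃/y₁ + θ² − θ, one has σ(z₁)=z₁, σ(z₂)=z₂, σ(z₃)=z₃, and K(y₁,y₂,y₃)^{⟨σ⟩} = K(z₁,z₂,z₃). -/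
set_option synthInstance.maxHeartbeats 1000000
set_option maxHeartbeats 2000000

open MvPolynomial IntermediateField Module

/-- The images of the variables `X i` in the fraction field `K(y₁,y₂,y₃)`. -/
noncomputable def Yv (K : Type*) [Field K] : Fin 3 → FractionRing (MvPolynomial (Fin 3) K) :=
  fun i => algebraMap (MvPolynomial (Fin 3) K) (FractionRing (MvPolynomial (Fin 3) K)) (X i)

theorem fixed_field_triangular_char3_aux (K : Type*) [Field K] [CharP K 3]
    (σ : FractionRing (MvPolynomial (Fin 3) K) ≃ₐ[K] FractionRing (MvPolynomial (Fin 3) K))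
    (hy0 : σ (Yv K 0) = Yv K 0)
    (hy1 : σ (Yv K 1) = Yv K 1 + Yv K 0)
    (hy2 : σ (Yv K 2) = Yv K 2 + Yv K 1) :
    (σ (Yv K 0) = Yv K 0 ∧
      σ ((Yv K 1 / Yv K 0) ^ 3 - Yv K 1 / Yv K 0) = (Yv K 1 / Yv K 0) ^ 3 - Yv K 1 / Yv K 0 ∧
      σ (Yv K 2 / Yv K 0 + (Yv K 1 / Yv K 0) ^ 2 - Yv K 1 / Yv K 0)
        = Yv K 2 / Yv K 0 + (Yv K 1 / Yv K 0) ^ 2 - Yv K 1 / Yv K 0) ∧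
    IntermediateField.fixedField (Subgroup.closure {σ}) =
      IntermediateField.adjoin K {Yv K 0, (Yv K 1 / Yv K 0) ^ 3 - Yv K 1 / Yv K 0,
        Yv K 2 / Yv K 0 + (Yv K 1 / Yv K 0) ^ 2 - Yv K 1 / Yv K 0} := by
  have h3 : (3 : FractionRing (MvPolynomial (Fin 3) K)) = 0 := by
    have : CharP (FractionRing (MvPolynomial (Fin 3) K)) 3 :=
      charP_of_injective_algebraMap
        (algebraMap K (FractionRing (MvPolynomial (Fin 3) K))).injective 3
    exact CharP.cast_eq_zero _ 3
  have hne : Yv K 0 ≠ 0 := by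
    simp only [Yv, ne_eq, IsFractionRing.to_map_eq_zero_iff]
    exact MvPolynomial.X_ne_zero 0
  -- σ fixes the three invariants
  have hθ : σ (Yv K 1 / Yv K 0) = Yv K 1 / Yv K 0 + 1 := by
    rw [map_div₀, hy1, hy0, add_div, div_self hne]
  have hz2 : σ ((Yv K 1 / Yv K 0) ^ 3 - Yv K 1 / Yv K 0)
      = (Yv K 1 / Yv K 0) ^ 3 - Yv K 1 / Yv K 0 := by
    rw [map_sub, map_pow, hθ]
    linear_combination ((Yv K 1 / Yv K 0) ^ 2 + Yv K 1 / Yv K 0) * h3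
  have hz3 : σ (Yv K 2 / Yv K 0 + (Yv K 1 / Yv K 0) ^ 2 - Yv K 1 / Yv K 0)
      = Yv K 2 / Yv K 0 + (Yv K 1 / Yv K 0) ^ 2 - Yv K 1 / Yv K 0 := by
    rw [map_sub, map_add, map_pow, hθ, map_div₀, hy2, hy0, add_div]
    linear_combination (Yv K 1 / Yv K 0) * h3
  -- σ has order 3
  have key : ∀ r : MvPolynomial (Fin 3) K,
      σ (σ (σ (algebraMap (MvPolynomial (Fin 3) K) (FractionRing (MvPolynomial (Fin 3) K)) r)))
        = algebraMap (MvPolynomial (Fin 3) K) (FractionRing (MvPolynomial (Fin 3) K)) r := by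
    intro r
    induction r using MvPolynomial.induction_on with
    | C a =>
        have h := IsScalarTower.algebraMap_apply K (MvPolynomial (Fin 3) K)
          (FractionRing (MvPolynomial (Fin 3) K)) a
        rw [MvPolynomial.algebraMap_eq] at h
        rw [← h, AlgEquiv.commutes, AlgEquiv.commutes, AlgEquiv.commutes]
    | add p q hp hq => simp only [map_add, hp, hq]
    | mul_X p i hp =>
        simp only [map_mul, hp]
        congr 1
        fin_cases i
        · show σ (σ (σ (Yv K 0))) = Yv K 0
          rw [hy0, hy0, hy0]
        · show σ (σ (σ (Yv K 1))) = Yv K 1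
          simp only [hy1, map_add, hy0]
          linear_combination (Yv K 0) * h3
        · show σ (σ (σ (Yv K 2))) = Yv K 2
          simp only [hy2, map_add, hy1, hy0]
          linear_combination (Yv K 1 + Yv K 0) * h3
  have hcube : σ ^ 3 = 1 := by
    ext x
    rw [pow_succ, pow_succ, pow_one, AlgEquiv.mul_apply, AlgEquiv.mul_apply, AlgEquiv.one_apply]
    obtain ⟨a, b, hb, rfl⟩ := IsFractionRing.div_surjective (A := MvPolynomial (Fin 3) K) x
    rw [map_div₀, map_div₀, map_div₀, key, key]
  have hne1 : σ ≠ 1 := by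
    intro h
    rw [h] at hy1
    simp only [AlgEquiv.one_apply, left_eq_add] at hy1
    exact hne hy1
  have : Fact (Nat.Prime 3) := ⟨by norm_num⟩
  have hord : orderOf σ = 3 := orderOf_eq_prime hcube hne1
  refine ⟨⟨hy0, hz2, hz3⟩, ?_⟩
  -- the fixed field computation
  set H : Subgroup (FractionRing (MvPolynomial (Fin 3) K) ≃ₐ[K]
      FractionRing (MvPolynomial (Fin 3) K)) := Subgroup.closure {σ} with hH
  set E : IntermediateField K (FractionRing (MvPolynomial (Fin 3) K)) :=
    IntermediateField.adjoin K {Yv K 0, (Yv K 1 / Yv K 0) ^ 3 - Yv K 1 / Yv K 0,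
      Yv K 2 / Yv K 0 + (Yv K 1 / Yv K 0) ^ 2 - Yv K 1 / Yv K 0} with hE
  have hfix : ∀ x : FractionRing (MvPolynomial (Fin 3) K), σ x = x → ∀ τ ∈ H, τ x = x := by
    intro x hx τ hτ
    induction hτ using Subgroup.closure_induction with
    | mem g hg => rw [Set.mem_singleton_iff.mp hg]; exact hx
    | one => rfl
    | mul g g' _ _ hg hg' => rw [AlgEquiv.mul_apply, hg', hg]
    | inv g _ hg =>
        refine g.injective ?_
        rw [← AlgEquiv.mul_apply, mul_inv_cancel, AlgEquiv.one_apply, hg]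
  have hle : E ≤ fixedField H := by
    rw [hE]
    apply IntermediateField.adjoin_le_iff.mpr
    rintro x (rfl | rfl | rfl)
    · intro g; rw [Subgroup.smul_def, AlgEquiv.smul_def]; exact hfix _ hy0 g.1 g.2
    · intro g; rw [Subgroup.smul_def, AlgEquiv.smul_def]; exact hfix _ hz2 g.1 g.2
    · intro g; rw [Subgroup.smul_def, AlgEquiv.smul_def]; exact hfix _ hz3 g.1 g.2
  haveI : Finite H := by
    rw [hH, ← Subgroup.zpowers_eq_closure]
    have : IsOfFinOrder σ := by rw [← orderOf_pos_iff, hord]; norm_num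
    exact this.finite_zpowers
  haveI : Fintype H := Fintype.ofFinite H
  haveI : FaithfulSMul H (FractionRing (MvPolynomial (Fin 3) K)) :=
    ⟨fun {g1 g2} h => Subtype.ext (AlgEquiv.ext fun x => h x)⟩
  have hcard : Fintype.card H = 3 := by
    rw [← Nat.card_eq_fintype_card, hH, ← Subgroup.zpowers_eq_closure, Nat.card_zpowers, hord]
  have hartin : finrank (fixedField H) (FractionRing (MvPolynomial (Fin 3) K)) = 3 :=
    (FixedPoints.finrank_eq_card H _).trans hcard
  have hz1E : Yv K 0 ∈ E := subset_adjoin K _ (by simp)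
  have hz2E : (Yv K 1 / Yv K 0) ^ 3 - Yv K 1 / Yv K 0 ∈ E := subset_adjoin K _ (by simp)
  have hz3E : Yv K 2 / Yv K 0 + (Yv K 1 / Yv K 0) ^ 2 - Yv K 1 / Yv K 0 ∈ E :=
    subset_adjoin K _ (by simp)
  set q : Polynomial E := Polynomial.X ^ 3 - Polynomial.X
      - Polynomial.C ⟨(Yv K 1 / Yv K 0) ^ 3 - Yv K 1 / Yv K 0, hz2E⟩ with hq
  have hqmonic : q.Monic := by rw [hq]; monicity!
  have hqdeg : q.natDegree = 3 := by rw [hq]; compute_degree!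
  have hqaeval : Polynomial.aeval (Yv K 1 / Yv K 0) q = 0 := by
    rw [hq]
    simp only [map_sub, map_pow, Polynomial.aeval_X, Polynomial.aeval_C]
    rw [IntermediateField.algebraMap_apply]
    simp
  have hint : IsIntegral E (Yv K 1 / Yv K 0) := ⟨q, hqmonic, hqaeval⟩
  have hbase : ∀ x : FractionRing (MvPolynomial (Fin 3) K), x ∈ E →
      x ∈ IntermediateField.adjoin E {Yv K 1 / Yv K 0} := fun x hx =>
    IntermediateField.algebraMap_mem (IntermediateField.adjoin E {Yv K 1 / Yv K 0}) (⟨x, hx⟩ : E)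
  have hθmem : Yv K 1 / Yv K 0 ∈ IntermediateField.adjoin E {Yv K 1 / Yv K 0} :=
    IntermediateField.mem_adjoin_simple_self E _
  have himg : ∀ r : MvPolynomial (Fin 3) K,
      algebraMap (MvPolynomial (Fin 3) K) (FractionRing (MvPolynomial (Fin 3) K)) r
        ∈ IntermediateField.adjoin E {Yv K 1 / Yv K 0} := by
    intro r
    induction r using MvPolynomial.induction_on with
    | C a =>
        have h := IsScalarTower.algebraMap_apply K (MvPolynomial (Fin 3) K)
          (FractionRing (MvPolynomial (Fin 3) K)) a
        rw [MvPolynomial.algebraMap_eq] at h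
        rw [← h, IsScalarTower.algebraMap_apply K E (FractionRing (MvPolynomial (Fin 3) K))]
        exact IntermediateField.algebraMap_mem _ _
    | add p q' hp hq' => rw [map_add]; exact add_mem hp hq'
    | mul_X p i hp =>
        rw [map_mul]
        refine mul_mem hp ?_
        fin_cases i
        · exact hbase _ hz1E
        · show Yv K 1 ∈ _
          have h1 : Yv K 1 / Yv K 0 * Yv K 0 = Yv K 1 := div_mul_cancel₀ _ hne
          have h2 := mul_mem hθmem (hbase _ hz1E)
          rwa [h1] at h2
        · show Yv K 2 ∈ _
          have h1 : (Yv K 2 / Yv K 0 + (Yv K 1 / Yv K 0) ^ 2 - Yv K 1 / Yv K 0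
              - (Yv K 1 / Yv K 0) ^ 2 + Yv K 1 / Yv K 0) * Yv K 0 = Yv K 2 := by
            have h2 : Yv K 2 / Yv K 0 + (Yv K 1 / Yv K 0) ^ 2 - Yv K 1 / Yv K 0
                - (Yv K 1 / Yv K 0) ^ 2 + Yv K 1 / Yv K 0 = Yv K 2 / Yv K 0 := by ring
            rw [h2, div_mul_cancel₀ _ hne]
          have h3 := mul_mem (add_mem (sub_mem (hbase _ hz3E) (pow_mem hθmem 2)) hθmem)
            (hbase _ hz1E)
          rwa [h1] at h3
  have htop : IntermediateField.adjoin E {Yv K 1 / Yv K 0} = ⊤ := by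
    rw [eq_top_iff]
    intro x _
    obtain ⟨a, b, hb, rfl⟩ := IsFractionRing.div_surjective (A := MvPolynomial (Fin 3) K) x
    exact div_mem (himg a) (himg b)
  haveI hfd : FiniteDimensional E (FractionRing (MvPolynomial (Fin 3) K)) := by
    have h1 : FiniteDimensional E (IntermediateField.adjoin E {Yv K 1 / Yv K 0}) :=
      IntermediateField.adjoin.finiteDimensional hint
    rw [htop] at h1
    exact Module.Finite.equiv (IntermediateField.topEquiv (F := E)
      (E := FractionRing (MvPolynomial (Fin 3) K))).toLinearEquiv
  have hrank : finrank E (FractionRing (MvPolynomial (Fin 3) K)) ≤ 3 := by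
    have e1 : finrank E (IntermediateField.adjoin E {Yv K 1 / Yv K 0})
        = (minpoly E (Yv K 1 / Yv K 0)).natDegree := IntermediateField.adjoin.finrank hint
    have hq3 : q.degree = 3 := by
      rw [Polynomial.degree_eq_natDegree hqmonic.ne_zero, hqdeg]; rfl
    have e2 : (minpoly E (Yv K 1 / Yv K 0)).natDegree ≤ 3 := by
      have hd := minpoly.degree_le_of_ne_zero E (Yv K 1 / Yv K 0) hqmonic.ne_zero hqaeval
      rw [hq3] at hd
      exact Polynomial.natDegree_le_iff_degree_le.mpr hd
    have e3 : finrank E (FractionRing (MvPolynomial (Fin 3) K))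
        = finrank E (IntermediateField.adjoin E {Yv K 1 / Yv K 0}) := by
      rw [htop]
      exact ((IntermediateField.topEquiv (F := E)
        (E := FractionRing (MvPolynomial (Fin 3) K))).toLinearEquiv.finrank_eq).symm
    rw [e3, e1]
    exact e2
  exact (IntermediateField.eq_of_le_of_finrank_le' hle (by rw [hartin]; exact hrank)).symm

/-- Over a field `K` of characteristic 3, for the triangular automorphism `σ` of
`K(y₁,y₂,y₃)` with `σ(y₁)=y₁, σ(y₂)=y₂+y₁, σ(y₃)=y₃+y₂`, setting `θ = y₂/y₁`,
`z₁ = y₁`, `z₂ = θ³-θ`, `z₃ = y₃/y₁ + θ² - θ`, each `zᵢ` is fixed by `σ` and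
the fixed field equals `K(z₁,z₂,z₃)`. -/
theorem fixed_field_triangular_char3 (K : Type*) [Field K] [CharP K 3]
    (σ : FractionRing (MvPolynomial (Fin 3) K) ≃ₐ[K] FractionRing (MvPolynomial (Fin 3) K)) :
    letI R := MvPolynomial (Fin 3) K
    letI F := FractionRing R
    letI y : Fin 3 → F := fun i => algebraMap R F (MvPolynomial.X i)
    letI θ : F := y 1 / y 0
    letI z₁ : F := y 0
    letI z₂ : F := θ ^ 3 - θ
    letI z₃ : F := y 2 / y 0 + θ ^ 2 - θ
    (σ (y 0) = y 0) → (σ (y 1) = y 1 + y 0) → (σ (y 2) = y 2 + y 1) →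
    (σ z₁ = z₁ ∧ σ z₂ = z₂ ∧ σ z₃ = z₃) ∧
    IntermediateField.fixedField (Subgroup.closure {σ}) =
      IntermediateField.adjoin K {z₁, z₂, z₃} := by
  intro hy0 hy1 hy2
  exact fixed_field_triangular_char3_aux K σ hy0 hy1 hy2
end

section
/- Let K be a field containing a primitive cube root of unity ζ₃ (so char K ≠ 3), and let σ be the K-automorphism of K(y₁,y₂,y₃) with σ(y₁)=y₁, σ(y₂)=ζ₃y₂, σ(y₃)=ζ₃²y₃. Then K(y₁,y₂,y₃)^{⟨σ⟩} = K(y₁, y₂²/y₃, y₃²/y₂). -/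
/-!
The monomials `y₁`, `y₂² / y₃`, `y₃² / y₂` are `σ`-invariant, so `L = K(y₁, y₂²/y₃, y₃²/y₂)` lies
in the fixed field. Conversely `y₃ = y₂² / (y₂²/y₃)`, so the whole field is `L(y₂)`, and
`y₂³ = (y₂²/y₃)² · (y₃²/y₂) ∈ L`, hence `[K(y) : L] ≤ 3`. By Artin's theorem the fixed field of
the order-`3` automorphism `σ` has index exactly `3`, which forces equality.
-/

open IntermediateField Module

namespace AlgEquiv

theorem pow_apply_of_apply_eq_algebraMap_mul {K F : Type*} [CommSemiring K] [Semiring F]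
    [Algebra K F] {σ : F ≃ₐ[K] F} {x : F} {c : K} (h : σ x = algebraMap K F c * x) (n : ℕ) :
    (σ ^ n) x = algebraMap K F (c ^ n) * x := by
  induction n with
  | zero => simp
  | succ n ih =>
    rw [pow_succ', mul_apply, ih, map_mul, commutes, h, ← mul_assoc, ← map_mul, ← pow_succ]

variable {K F : Type*} [Field K] [Field F] [Algebra K F] {σ : F ≃ₐ[K] F}

theorem ne_one_of_apply_eq_algebraMap_mul {x : F} (hx : x ≠ 0) {c : K} (hc : c ≠ 1)
    (h : σ x = algebraMap K F c * x) : σ ≠ 1 := by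
  rintro rfl
  refine hc ((algebraMap K F).injective (mul_right_cancel₀ hx ?_))
  rw [← h, map_one, one_mul]
  rfl

theorem apply_sq_div_eq_self {a : K} (ha : a ≠ 0) {u v : F} (hu : σ u = algebraMap K F a * u)
    (hv : σ v = algebraMap K F (a ^ 2) * v) : σ (u ^ 2 / v) = u ^ 2 / v := by
  rw [map_div₀, map_pow, hu, hv, mul_pow, ← map_pow,
    mul_div_mul_left _ _ ((map_ne_zero _).2 (pow_ne_zero 2 ha))]

end AlgEquiv

namespace IntermediateField

variable {K E : Type*} [Field K] [Field E] [Algebra K E]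

open Polynomial in
theorem finrank_adjoin_simple_le_of_pow_eq {α : E} {n : ℕ} (hn : n ≠ 0) {a : K}
    (ha : α ^ n = algebraMap K E a) : finrank K K⟮α⟯ ≤ n := by
  have hroot : aeval α (X ^ n - C a) = 0 := by simp [ha]
  have hint : IsIntegral K α := ⟨_, monic_X_pow_sub_C a hn, hroot⟩
  rw [adjoin.finrank hint, ← natDegree_X_pow_sub_C (n := n) (r := a)]
  exact natDegree_le_natDegree <|
    minpoly.degree_le_of_ne_zero K α (X_pow_sub_C_ne_zero (Nat.pos_of_ne_zero hn) a) hroot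

theorem finrank_fixedField_zpowers {σ : E ≃ₐ[K] E} (hσ : orderOf σ ≠ 0) :
    finrank (fixedField (Subgroup.zpowers σ)) E = orderOf σ := by
  have hcard : Nat.card (Subgroup.zpowers σ) = orderOf σ := Nat.card_zpowers σ
  have : Finite (Subgroup.zpowers σ) := Nat.finite_of_card_ne_zero (hcard ▸ hσ)
  have : Fintype (Subgroup.zpowers σ) := .ofFinite _
  rw [← hcard, Nat.card_eq_fintype_card]
  exact FixedPoints.finrank_eq_card _ E

theorem mem_fixedField_zpowers_iff {σ : E ≃ₐ[K] E} {x : E} :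
    x ∈ fixedField (Subgroup.zpowers σ) ↔ σ x = x := by
  refine ⟨fun h ↦ (mem_fixedField_iff _ x).1 h σ (Subgroup.mem_zpowers σ),
    fun h ↦ (mem_fixedField_iff _ x).2 fun f hf ↦ ?_⟩
  exact (Subgroup.zpowers_le (H := MulAction.stabilizer _ x)).2 h hf

theorem eq_fixedField_zpowers_of_adjoin_simple_eq_top {σ : E ≃ₐ[K] E} {n : ℕ}
    (hσ : orderOf σ = n) (hn : n ≠ 0) {L : IntermediateField K E}
    (hL : L ≤ fixedField (Subgroup.zpowers σ)) {α : E} (hα : L⟮α⟯ = ⊤) (hαn : α ^ n ∈ L) :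
    L = fixedField (Subgroup.zpowers σ) := by
  have hdeg : finrank L E ≤ n := by
    rw [← finrank_top', ← hα]
    exact finrank_adjoin_simple_le_of_pow_eq hn (a := ⟨_, hαn⟩) rfl
  have hint : IsIntegral L α :=
    .of_pow (Nat.pos_of_ne_zero hn) (isIntegral_algebraMap (x := (⟨_, hαn⟩ : L)))
  have : FiniteDimensional L E := by
    have := adjoin.finiteDimensional hint
    rw [hα] at this
    exact topEquiv.toLinearEquiv.finiteDimensional
  refine eq_of_le_of_finrank_le' hL ?_
  rwa [finrank_fixedField_zpowers (hσ ▸ hn), hσ]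

theorem adjoin_sq_div_le_fixedField_zpowers {σ : E ≃ₐ[K] E} {ζ : K} (hζ : IsPrimitiveRoot ζ 3)
    {u v w : E} (hw : σ w = w) (hu : σ u = algebraMap K E ζ * u)
    (hv : σ v = algebraMap K E (ζ ^ 2) * v) :
    adjoin K {w, u ^ 2 / v, v ^ 2 / u} ≤ fixedField (Subgroup.zpowers σ) := by
  have hζ0 : ζ ≠ 0 := hζ.ne_zero three_ne_zero
  -- `ζ ^ 4 = ζ`: for `v ^ 2 / u` the roles of `u` and `v` swap, with `a = ζ ^ 2`
  have hu' : σ u = algebraMap K E ((ζ ^ 2) ^ 2) * u := by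
    rw [hu, ← pow_mul, show ζ ^ (2 * 2) = ζ * ζ ^ 3 by ring, hζ.pow_eq_one, mul_one]
  rw [adjoin_le_iff]
  rintro _ (rfl | rfl | rfl) <;> rw [SetLike.mem_coe, mem_fixedField_zpowers_iff]
  exacts [hw, σ.apply_sq_div_eq_self hζ0 hu hv, σ.apply_sq_div_eq_self (pow_ne_zero 2 hζ0) hv hu']

theorem pow_three_mem_adjoin_sq_div {u v : E} (hu : u ≠ 0) (hv : v ≠ 0) (w : E) :
    u ^ 3 ∈ adjoin K {w, u ^ 2 / v, v ^ 2 / u} := by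
  have h : u ^ 3 = (u ^ 2 / v) ^ 2 * (v ^ 2 / u) := by
    rw [div_pow, div_mul_div_comm, eq_div_iff (mul_ne_zero (pow_ne_zero 2 hv) hu)]
    ring
  exact h ▸ mul_mem (pow_mem (subset_adjoin _ _ (by simp)) 2) (subset_adjoin _ _ (by simp))

theorem adjoin_sq_div_adjoin_simple_eq_top {u v w : E} (hu : u ≠ 0)
    (h : adjoin K {w, u, v} = ⊤) : (adjoin K {w, u ^ 2 / v, v ^ 2 / u})⟮u⟯ = ⊤ := by
  set L := adjoin K {w, u ^ 2 / v, v ^ 2 / u}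
  have hL : ∀ x ∈ L, x ∈ L⟮u⟯ := fun x hx ↦ (L⟮u⟯).algebraMap_mem ⟨x, hx⟩
  have hu' : u ∈ L⟮u⟯ := mem_adjoin_simple_self L u
  have hv : v ∈ L⟮u⟯ := by
    have h := div_mem (pow_mem hu' 2) (hL (u ^ 2 / v) (subset_adjoin _ _ (by simp)))
    rwa [div_div_cancel₀ (pow_ne_zero 2 hu)] at h
  apply restrictScalars_injective K
  rw [restrictScalars_top, eq_top_iff, ← h, adjoin_le_iff, Set.insert_subset_iff,
    Set.insert_subset_iff, Set.singleton_subset_iff]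
  exact ⟨hL w (subset_adjoin _ _ (by simp)), hu', hv⟩

end IntermediateField

namespace MvPolynomial

variable {ι R : Type*} [CommRing R]

theorem algHom_ext_fractionRing {A : Type*} [Semiring A] [Algebra R A]
    ⦃φ ψ : FractionRing (MvPolynomial ι R) →ₐ[R] A⦄
    (h : ∀ i, φ (algebraMap (MvPolynomial ι R) _ (X i)) =
      ψ (algebraMap (MvPolynomial ι R) _ (X i))) :
    φ = ψ := by
  have hpoly : φ.comp (IsScalarTower.toAlgHom R _ _) = ψ.comp (IsScalarTower.toAlgHom R _ _) :=
    algHom_ext h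
  exact AlgHom.coe_ringHom_injective <|
    IsLocalization.ringHom_ext (nonZeroDivisors (MvPolynomial ι R))
      (RingHom.ext fun x ↦ DFunLike.congr_fun hpoly x)

theorem algEquiv_pow_eq_one_of_apply_X
    {σ : FractionRing (MvPolynomial ι R) ≃ₐ[R] FractionRing (MvPolynomial ι R)} {c : ι → R} {n : ℕ}
    (hσ : ∀ i, σ (algebraMap (MvPolynomial ι R) _ (X i)) =
      algebraMap R _ (c i) * algebraMap (MvPolynomial ι R) _ (X i))
    (hc : ∀ i, c i ^ n = 1) : σ ^ n = 1 :=
  AlgEquiv.coe_toAlgHom_injective <| algHom_ext_fractionRing fun i ↦ by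
    simp [AlgEquiv.pow_apply_of_apply_eq_algebraMap_mul (hσ i), hc i]

theorem adjoin_range_X_eq_top_fractionRing (K : Type*) [Field K] :
    adjoin K (Set.range fun i ↦
      algebraMap (MvPolynomial ι K) (FractionRing (MvPolynomial ι K)) (X i)) = ⊤ := by
  rw [← IsFractionRing.algHom_fieldRange_eq_of_comp_eq_of_range_eq (f := AlgHom.id K _)
    (g := IsScalarTower.toAlgHom K (MvPolynomial ι K) _) rfl]
  · exact top_unique fun x _ ↦ ⟨x, rfl⟩
  · rw [← Algebra.map_top, ← adjoin_range_X, AlgHom.map_adjoin, ← Set.range_comp]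
    rfl

end MvPolynomial

open MvPolynomial

/-- If `ζ₃ ∈ K` is a primitive cube root of unity and `σ` is the automorphism of
`K(y₁,y₂,y₃)` with `σ(y₁)=y₁, σ(y₂)=ζ₃y₂, σ(y₃)=ζ₃²y₃`, then the fixed field is
`K(y₁, y₂²/y₃, y₃²/y₂)`. -/
theorem fixed_field_diagonal_zeta3 (K : Type*) [Field K] (ζ : K) (hζ : IsPrimitiveRoot ζ 3)
    (σ : FractionRing (MvPolynomial (Fin 3) K) ≃ₐ[K] FractionRing (MvPolynomial (Fin 3) K)) :
    letI R := MvPolynomial (Fin 3) K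
    letI F := FractionRing R
    letI y : Fin 3 → F := fun i => algebraMap R F (MvPolynomial.X i)
    (σ (y 0) = y 0) → (σ (y 1) = algebraMap K F ζ * y 1) →
    (σ (y 2) = algebraMap K F (ζ ^ 2) * y 2) →
    IntermediateField.fixedField (Subgroup.closure {σ}) =
      IntermediateField.adjoin K {y 0, y 1 ^ 2 / y 2, y 2 ^ 2 / y 1} := by
  intro hσ0 hσ1 hσ2
  set F := FractionRing (MvPolynomial (Fin 3) K)
  set y : Fin 3 → F := fun i ↦ algebraMap (MvPolynomial (Fin 3) K) F (X i)
  have hy : ∀ i, y i ≠ 0 := fun i ↦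
    (map_ne_zero_iff _ (IsFractionRing.injective (MvPolynomial (Fin 3) K) F)).2 (X_ne_zero i)
  have hgen : adjoin K {y 0, y 1, y 2} = ⊤ := by
    rw [← adjoin_range_X_eq_top_fractionRing]
    congr 1
    ext
    simp [Fin.exists_fin_succ, eq_comm, y, F]
  have hσ3 : σ ^ 3 = 1 := by
    refine algEquiv_pow_eq_one_of_apply_X (c := ![1, ζ, ζ ^ 2]) (fun i ↦ ?_) (fun i ↦ ?_)
    · fin_cases i
      exacts [by simpa using hσ0, hσ1, hσ2]
    · have hζ6 : (ζ ^ 2) ^ 3 = 1 := by rw [← pow_mul, pow_mul', hζ.pow_eq_one, one_pow]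
      fin_cases i
      exacts [one_pow 3, hζ.pow_eq_one, hζ6]
  have hσ_ne : σ ≠ 1 := σ.ne_one_of_apply_eq_algebraMap_mul (hy 1) (hζ.ne_one (by norm_num)) hσ1
  rw [← Subgroup.zpowers_eq_closure]
  exact (eq_fixedField_zpowers_of_adjoin_simple_eq_top (orderOf_eq_prime hσ3 hσ_ne) three_ne_zero
    (adjoin_sq_div_le_fixedField_zpowers hζ hσ0 hσ1 hσ2)
    (adjoin_sq_div_adjoin_simple_eq_top (hy 1) hgen)
    (pow_three_mem_adjoin_sq_div (hy 1) (hy 2) (y 0))).symm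
end

section
/- (Hajja–Kang linearization over a faithful base) Let G be a finite group acting by field automorphisms on L(y₁,...,ym), the rational function field in m variables over a field L, such that L is G-stable, the restriction of G to L is faithful, and for every σ ∈ G the vector (σ(y₁),...,σ(ym)) equals A(σ)·(y₁,...,ym)ᵗ + B(σ) for some A(σ) ∈ GLₘ(L) and B(σ) ∈ Lᵐ. Then there exist z₁,...,zm ∈ L(y₁,...,ym), fixed by G, with L(y₁,...,ym) = L(z₁,...,zm); consequently L(y₁,...,ym)^G = L^G(z₁,...,zm) is rational over L^G. -/
/-!
Extending scalars from `L^G` to `L` identifies the `L`-span `V` of `1, y₁, …, yₘ` with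
`L ⊗ V^G`: a linear form vanishing on `V^G` kills every trace `∑ σ (a v)`, and Dedekind's
independence of the characters `σ|_L` then forces it to kill `V` (Speiser's lemma). A basis of
`V` made of `G`-fixed vectors and containing `1` gives `z₁, …, zₘ` with `L(z) = L(y)`.
Finally `K = L(y)` is generated over `F = L^G(z) ⊆ K^G` by `L`, so
`[K : F] ≤ [L : L^G] = |G| = [K : K^G]` by Artin's theorem, whence `F = K^G`.
-/

open Module Submodule

theorem exists_fin_cons_span_eq {F M : Type*} [Field F] [AddCommGroup M] [Module F M] {m : ℕ}
    {v : Fin (m + 1) → M} (hv : LinearIndependent F v) {S : Set M}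
    (hS : span F S = span F (Set.range v)) {x : M} (hx : x ∈ S) (hx0 : x ≠ 0) :
    ∃ z : Fin m → M,
      Set.range z ⊆ S ∧ span F (Set.range (Fin.cons x z)) = span F (Set.range v) := by
  classical
  have hx' : LinearIndepOn F id {x} := .singleton hx0
  have hxS : {x} ⊆ S := Set.singleton_subset_iff.mpr hx
  set b := hx'.extend hxS
  have hb : LinearIndepOn F id b := hx'.linearIndepOn_extend hxS
  have hspan : span F b = span F (Set.range v) := (hx'.span_extend_eq_span hxS).trans hS
  have : Finite b := LinearIndependent.finite_of_le_span_finite _ hb (Set.range v)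
    (by rw [← hspan]; rintro _ ⟨y, rfl⟩; exact subset_span y.2)
  cases nonempty_fintype b
  have hcard : (b.toFinset.erase x).card = m := by
    have h := finrank_span_set_eq_card hb
    rw [hspan, finrank_span_eq_card hv, Fintype.card_fin] at h
    rw [Finset.card_erase_of_mem (Set.mem_toFinset.mpr (hx'.subset_extend hxS rfl)), ← h]
    rfl
  set e := (b.toFinset.erase x).equivFinOfCardEq hcard
  refine ⟨fun i => e.symm i, ?_, ?_⟩
  · rintro _ ⟨i, rfl⟩
    exact hx'.extend_subset hxS (Set.mem_toFinset.mp (Finset.mem_of_mem_erase (e.symm i).2))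
  · have hrange : Set.range (fun i => (e.symm i : M)) = ↑(b.toFinset.erase x) := by
      ext y
      exact ⟨by rintro ⟨i, rfl⟩; exact (e.symm i).2, fun hy => ⟨e ⟨y, hy⟩, by simp⟩⟩
    rw [Fin.range_cons, hrange, Finset.coe_erase, Set.coe_toFinset, Set.insert_sdiff_singleton,
      Set.insert_eq_of_mem (hx'.subset_extend hxS rfl), hspan]

section SemilinearAction

variable {G R M : Type*} [Monoid G] [Semiring R] [AddCommMonoid M] [Module R M]
  [DistribMulAction G M] [SMul G R] [SMulDistribClass G R M]

theorem smul_mem_span_of_forall_smul_mem_span {s : Set M}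
    (hs : ∀ (g : G), ∀ x ∈ s, g • x ∈ span R s) (g : G) {v : M} (hv : v ∈ span R s) :
    g • v ∈ span R s := by
  induction hv using span_induction with
  | mem x hx => exact hs g x hx
  | zero => rw [smul_zero]; exact zero_mem _
  | add x y _ _ hx hy => rw [smul_add]; exact add_mem hx hy
  | smul a x _ hx => rw [smul_distrib_smul]; exact smul_mem _ _ hx

end SemilinearAction

section FixedPoints

variable {G L K : Type*} [Group G] [Field L] [Field K] [Algebra L K]
  [MulSemiringAction G L] [MulSemiringAction G K] [SMulDistribClass G L K]

theorem algebraMap_mem_fixedPoints_subfield (c : FixedPoints.subfield G L) :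
    algebraMap (FixedPoints.subfield G L) K c ∈ FixedPoints.subfield G K := fun g => by
  rw [IsScalarTower.algebraMap_apply _ L K, ← algebraMap.smul']
  exact congrArg (algebraMap L K) (c.2 g)

theorem range_algebraMap_fixedPoints_subfield :
    Set.range (algebraMap (FixedPoints.subfield G L) K) =
      Set.range (algebraMap L K) ∩ FixedPoints.subfield G K := by
  ext x
  constructor
  · rintro ⟨c, rfl⟩
    exact ⟨⟨c, rfl⟩, algebraMap_mem_fixedPoints_subfield c⟩
  · rintro ⟨⟨a, rfl⟩, hfix⟩
    exact ⟨⟨a, fun g => FaithfulSMul.algebraMap_injective L K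
      (by rw [algebraMap.smul']; exact hfix g)⟩, rfl⟩

variable [Finite G] [FaithfulSMul G L]

theorem le_span_inter_fixedPoints {V : Submodule L K}
    (hV : ∀ g : G, ∀ v ∈ V, g • v ∈ V) :
    V ≤ span L ((V : Set K) ∩ MulAction.fixedPoints G K) := by
  cases nonempty_fintype G
  intro v hv
  by_contra hvW
  obtain ⟨ψ, hψv, hψW⟩ := exists_dual_map_eq_bot_of_notMem hvW inferInstance
  have htrace (a : L) : ∑ g : G, g • (a • v) ∈ (V : Set K) ∩ MulAction.fixedPoints G K :=
    ⟨sum_mem fun g _ => hV g _ (V.smul_mem a hv), fun h => by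
      rw [Finset.smul_sum]
      exact Fintype.sum_equiv (Equiv.mulLeft h) _ _ fun g => (mul_smul h g _).symm⟩
  have hdep : ∑ g : G, ψ (g • v) • ⇑(MulDistribMulAction.toMonoidHom L g) = 0 := by
    funext a
    have : ψ (∑ g : G, g • (a • v)) ∈ (⊥ : Submodule L L) :=
      hψW ▸ mem_map_of_mem (subset_span (htrace a))
    simp only [map_sum, smul_distrib_smul, map_smul, smul_eq_mul, mem_bot] at this
    simpa [mul_comm] using this
  have hχ : Function.Injective (MulDistribMulAction.toMonoidHom L : G → L →* L) :=
    fun g h e => eq_of_smul_eq_smul fun a => DFunLike.congr_fun e a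
  have := Fintype.linearIndependent_iff.mp
    ((linearIndependent_monoidHom L L).comp _ hχ) _ hdep 1
  exact hψv (by simpa using this)

theorem exists_fixed_fin_cons_span_eq {m : ℕ} {Y : Fin m → K}
    (hY : LinearIndependent L (Fin.cons 1 Y : Fin (m + 1) → K))
    (hYG : ∀ (g : G) (i : Fin m),
      g • Y i ∈ span L (Set.range (Fin.cons 1 Y : Fin (m + 1) → K))) :
    ∃ z : Fin m → K, (∀ (g : G) (i : Fin m), g • z i = z i) ∧
      span L (Set.range (Fin.cons 1 z : Fin (m + 1) → K)) =
        span L (Set.range (Fin.cons 1 Y : Fin (m + 1) → K)) := by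
  set V := span L (Set.range (Fin.cons 1 Y : Fin (m + 1) → K))
  have h1V : (1 : K) ∈ V := subset_span ⟨0, rfl⟩
  have hV : ∀ g : G, ∀ v ∈ V, g • v ∈ V := fun g _ =>
    smul_mem_span_of_forall_smul_mem_span (fun g => by
      rintro _ ⟨i, rfl⟩
      cases i using Fin.cases with
      | zero => rw [Fin.cons_zero, smul_one]; exact h1V
      | succ i => exact hYG g i) g
  have hS : span L ((V : Set K) ∩ MulAction.fixedPoints G K) = V :=
    le_antisymm (span_le.mpr Set.inter_subset_left) (le_span_inter_fixedPoints hV)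
  obtain ⟨z, hzS, hz⟩ := exists_fin_cons_span_eq hY hS ⟨h1V, smul_one⟩ one_ne_zero
  exact ⟨z, fun g i => (hzS ⟨i, rfl⟩).2 g, hz⟩

theorem FixedPoints.subfield_eq_adjoin_of_adjoin_eq_top {s : Set K}
    (hs : s ⊆ MulAction.fixedPoints G K) (htop : IntermediateField.adjoin L s = ⊤) :
    FixedPoints.subfield G K =
      (IntermediateField.adjoin (FixedPoints.subfield G L) s).toSubfield := by
  cases nonempty_fintype G
  set k := FixedPoints.subfield G L
  have : FaithfulSMul G K := ⟨fun {g h} hgh => eq_of_smul_eq_smul fun a =>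
    FaithfulSMul.algebraMap_injective L K (by rw [algebraMap.smul', algebraMap.smul', hgh])⟩
  let E : IntermediateField k K :=
    (FixedPoints.subfield G K).toIntermediateField algebraMap_mem_fixedPoints_subfield
  set F := IntermediateField.adjoin k s
  have hFE : F ≤ E := IntermediateField.adjoin_le_iff.mpr hs
  let Lk : IntermediateField k K := (IsScalarTower.toAlgHom k L K).fieldRange
  have hLk : finrank k Lk = Fintype.card G :=
    (LinearMap.finrank_range_of_inj (f := (IsScalarTower.toAlgHom k L K).toLinearMap)
      (FaithfulSMul.algebraMap_injective L K)).trans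
      (FixedPoints.finrank_eq_card G L)
  have : Module.Finite k Lk := Module.finite_of_finrank_pos (hLk ▸ Fintype.card_pos)
  have hLkF : IntermediateField.adjoin F (Lk : Set K) = ⊤ := by
    refine eq_top_iff.mpr fun x _ => ?_
    have hx : x ∈ (IntermediateField.adjoin L s).toSubfield := htop ▸ trivial
    rw [IntermediateField.adjoin_toSubfield] at hx
    refine Subfield.closure_le.mpr (Set.union_subset ?_ fun y hy => ?_) hx
    · rintro _ ⟨a, rfl⟩
      exact IntermediateField.subset_adjoin F _ ⟨a, rfl⟩
    · exact (IntermediateField.adjoin F _).algebraMap_mem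
        ⟨y, IntermediateField.subset_adjoin k s hy⟩
  have hrank : Module.rank F K ≤ Fintype.card G := by
    rw [← IntermediateField.rank_top', ← hLkF, ← hLk, Module.finrank_eq_rank]
    exact IntermediateField.adjoin_rank_le_of_isAlgebraic_right F Lk
  have : Module.Finite F K :=
    rank_lt_aleph0_iff.mp (hrank.trans_lt Cardinal.natCast_lt_aleph0)
  have := IntermediateField.eq_of_le_of_finrank_le' hFE
    ((finrank_le_of_rank_le hrank).trans (FixedPoints.finrank_eq_card G K).ge)
  rw [this]
  rfl

theorem exists_fixed_generators_of_span_stable {m : ℕ} {Y : Fin m → K}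
    (hY : LinearIndependent L (Fin.cons 1 Y : Fin (m + 1) → K))
    (hgen : IntermediateField.adjoin L (Set.range Y) = ⊤)
    (hYG : ∀ (g : G) (i : Fin m),
      g • Y i ∈ span L (Set.range (Fin.cons 1 Y : Fin (m + 1) → K))) :
    ∃ z : Fin m → K, (∀ (g : G) (i : Fin m), g • z i = z i) ∧
      IntermediateField.adjoin L (Set.range z) = ⊤ ∧
      FixedPoints.subfield G K =
        Subfield.closure
          ((Set.range (algebraMap L K) ∩ FixedPoints.subfield G K) ∪ Set.range z) := by
  obtain ⟨z, hfix, hspan⟩ := exists_fixed_fin_cons_span_eq hY hYG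
  have htop : IntermediateField.adjoin L (Set.range z) = ⊤ := by
    rw [eq_top_iff, ← hgen, IntermediateField.adjoin_le_iff]
    rintro _ ⟨i, rfl⟩
    set F := IntermediateField.adjoin L (Set.range z)
    refine (span_le (p := F.toSubalgebra.toSubmodule)).mpr ?_
      (hspan ▸ subset_span ⟨i.succ, rfl⟩ : Y i ∈ span L (Set.range (Fin.cons 1 z)))
    rw [Fin.range_cons]
    exact Set.insert_subset F.one_mem (IntermediateField.subset_adjoin L _)
  refine ⟨z, hfix, htop, (FixedPoints.subfield_eq_adjoin_of_adjoin_eq_top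
    (Set.range_subset_iff.mpr fun i g => hfix g i) htop).trans ?_⟩
  rw [IntermediateField.adjoin_toSubfield, range_algebraMap_fixedPoints_subfield]

end FixedPoints

theorem exists_mulSemiringAction_of_smul_mem_range {G L K : Type*} [Group G] [Field L] [Field K]
    [Algebra L K] [MulSemiringAction G K]
    (hstable : ∀ (g : G) (a : L), g • algebraMap L K a ∈ Set.range (algebraMap L K))
    (hfaithful : ∀ g : G, (∀ a : L, g • algebraMap L K a = algebraMap L K a) → g = 1) :
    ∃ _ : MulSemiringAction G L, SMulDistribClass G L K ∧ FaithfulSMul G L := by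
  let _ : SMul G L := ⟨fun g a => (hstable g a).choose⟩
  have hcompat (g : G) (a : L) : algebraMap L K (g • a) = g • algebraMap L K a :=
    (hstable g a).choose_spec
  have : SMulDistribClass G L K :=
    ⟨fun g a x => by rw [Algebra.smul_def, Algebra.smul_def, smul_mul', hcompat]⟩
  refine ⟨mulSemiringActionOfSmulDistribClass L K G, this, ⟨fun {g h} hgh => ?_⟩⟩
  refine (inv_mul_eq_one.mp (hfaithful _ fun a => ?_)).symm
  rw [mul_smul, ← hcompat, hgh, hcompat, inv_smul_smul]

namespace MvPolynomial

variable {R K : Type*} [Field R] [Field K] {m : ℕ}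

theorem linearIndependent_finCons_one_X :
    LinearIndependent R (Fin.cons 1 X : Fin (m + 1) → MvPolynomial (Fin m) R) := by
  refine linearIndependent_finCons.mpr ⟨linearIndependent_X _ _, fun h => ?_⟩
  have := (span_le (p := LinearMap.ker (lcoeff R (0 : Fin m →₀ ℕ)))).mpr ?_ h
  · simp at this
  · rintro _ ⟨i, rfl⟩
    simp

variable [Algebra (MvPolynomial (Fin m) R) K] [Algebra R K]
  [IsScalarTower R (MvPolynomial (Fin m) R) K] [IsFractionRing (MvPolynomial (Fin m) R) K]

theorem linearIndependent_finCons_one_algebraMap_X :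
    LinearIndependent R
      (Fin.cons 1 fun i => algebraMap (MvPolynomial (Fin m) R) K (X i) : Fin (m + 1) → K) := by
  have := linearIndependent_finCons_one_X.map' (IsScalarTower.toAlgHom R _ K).toLinearMap
    (LinearMap.ker_eq_bot.mpr (IsFractionRing.injective (MvPolynomial (Fin m) R) K))
  rwa [Fin.comp_cons, AlgHom.toLinearMap_apply, map_one] at this

theorem adjoin_range_algebraMap_X_eq_top :
    IntermediateField.adjoin R
      (Set.range fun i => algebraMap (MvPolynomial (Fin m) R) K (X i)) = ⊤ := by
  set F := IntermediateField.adjoin R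
    (Set.range fun i => algebraMap (MvPolynomial (Fin m) R) K (X i))
  have hpoly : ∀ p, algebraMap (MvPolynomial (Fin m) R) K p ∈ F := by
    intro p
    induction p using MvPolynomial.induction_on with
    | C a =>
      rw [← MvPolynomial.algebraMap_eq, ← IsScalarTower.algebraMap_apply]
      exact F.algebraMap_mem a
    | add p q hp hq => rw [map_add]; exact add_mem hp hq
    | mul_X p i hp =>
      rw [map_mul]
      exact mul_mem hp (IntermediateField.subset_adjoin R _ ⟨i, rfl⟩)
  refine eq_top_iff.mpr fun x _ => ?_
  obtain ⟨p, q, -, rfl⟩ := IsFractionRing.div_surjective (A := MvPolynomial (Fin m) R) x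
  exact div_mem (hpoly p) (hpoly q)

end MvPolynomial

theorem hajja_kang_linearization_general (L : Type*) [Field L] (m : ℕ)
    (G : Type*) [Group G] [Finite G]
    [MulSemiringAction G (FractionRing (MvPolynomial (Fin m) L))]
    (ι : L →+* FractionRing (MvPolynomial (Fin m) L))
    (hι : ι = algebraMap L (FractionRing (MvPolynomial (Fin m) L)))
    (Y : Fin m → FractionRing (MvPolynomial (Fin m) L))
    (hY : ∀ i, Y i = algebraMap (MvPolynomial (Fin m) L)
      (FractionRing (MvPolynomial (Fin m) L)) (MvPolynomial.X i))
    -- `L` is stable under `G`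
    (hstable : ∀ g : G, ∀ a : L, g • ι a ∈ Set.range ι)
    -- the restricted action of `G` on `L` is faithful
    (hfaithful : ∀ g : G, (∀ a : L, g • ι a = ι a) → g = 1)
    -- `G` acts affinely on the variables: `σ(y) = A(σ) y + B(σ)`
    (haffine : ∀ g : G, ∃ (A : Matrix (Fin m) (Fin m) L) (B : Fin m → L), IsUnit A.det ∧
      ∀ i, g • Y i = ∑ j, ι (A i j) * Y j + ι (B i)) :
    ∃ z : Fin m → FractionRing (MvPolynomial (Fin m) L),
      (∀ (g : G) (i : Fin m), g • z i = z i) ∧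
      Subfield.closure (Set.range ι ∪ Set.range z) = ⊤ ∧
      FixedPoints.subfield G (FractionRing (MvPolynomial (Fin m) L)) =
        Subfield.closure
          ((Set.range ι ∩
            (FixedPoints.subfield G (FractionRing (MvPolynomial (Fin m) L)) : Set
              (FractionRing (MvPolynomial (Fin m) L)))) ∪ Set.range z) := by
  subst hι
  obtain ⟨_, _, _⟩ := exists_mulSemiringAction_of_smul_mem_range hstable hfaithful
  have hYfun : Y = fun i => algebraMap (MvPolynomial (Fin m) L) _ (MvPolynomial.X i) := funext hY
  have hYG (g : G) (i : Fin m) :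
      g • Y i ∈ span L (Set.range (Fin.cons 1 Y : Fin (m + 1) → _)) := by
    obtain ⟨A, B, -, hAB⟩ := haffine g
    rw [hAB i, ← mul_one (algebraMap L _ (B i))]
    simp only [← Algebra.smul_def]
    exact add_mem (sum_mem fun j _ => smul_mem _ _ (subset_span ⟨j.succ, rfl⟩))
      (smul_mem _ _ (subset_span ⟨0, rfl⟩))
  obtain ⟨z, hfix, htop, hfixed⟩ := exists_fixed_generators_of_span_stable
    (hYfun ▸ MvPolynomial.linearIndependent_finCons_one_algebraMap_X)
    (hYfun ▸ MvPolynomial.adjoin_range_algebraMap_X_eq_top) hYG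
  exact ⟨z, hfix, by rw [← IntermediateField.adjoin_toSubfield, htop, IntermediateField.top_toSubfield],
    hfixed⟩

set_option synthInstance.maxHeartbeats 1000000 in
/-- Hajja–Kang linearization: if a finite group `G` acts by field automorphisms on
`L(y₁,…,yₘ)` stabilizing `L`, faithfully on `L`, and affinely (invertible matrix plus
translation over `L`) on the variables, then there are `G`-fixed elements `z₁,…,zₘ`
with `L(y₁,…,yₘ) = L(z₁,…,zₘ)`; hence `L(y₁,…,yₘ)^G = L^G(z₁,…,zₘ)`. -/
theorem hajja_kang_linearization (L : Type*) [Field L] (m : ℕ) (hm : 0 < m)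
    (G : Type*) [Group G] [Finite G]
    [MulSemiringAction G (FractionRing (MvPolynomial (Fin m) L))]
    (ι : L →+* FractionRing (MvPolynomial (Fin m) L))
    (hι : ι = algebraMap L (FractionRing (MvPolynomial (Fin m) L)))
    (Y : Fin m → FractionRing (MvPolynomial (Fin m) L))
    (hY : ∀ i, Y i = algebraMap (MvPolynomial (Fin m) L)
      (FractionRing (MvPolynomial (Fin m) L)) (MvPolynomial.X i))
    -- `L` is stable under `G`
    (hstable : ∀ g : G, ∀ a : L, g • ι a ∈ Set.range ι)
    -- the restricted action of `G` on `L` is faithful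
    (hfaithful : ∀ g : G, (∀ a : L, g • ι a = ι a) → g = 1)
    -- `G` acts affinely on the variables: `σ(y) = A(σ) y + B(σ)`
    (haffine : ∀ g : G, ∃ (A : Matrix (Fin m) (Fin m) L) (B : Fin m → L), IsUnit A.det ∧
      ∀ i, g • Y i = ∑ j, ι (A i j) * Y j + ι (B i)) :
    ∃ z : Fin m → FractionRing (MvPolynomial (Fin m) L),
      (∀ (g : G) (i : Fin m), g • z i = z i) ∧
      Subfield.closure (Set.range ι ∪ Set.range z) = ⊤ ∧
      FixedPoints.subfield G (FractionRing (MvPolynomial (Fin m) L)) =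
        Subfield.closure
          ((Set.range ι ∩
            (FixedPoints.subfield G (FractionRing (MvPolynomial (Fin m) L)) : Set
              (FractionRing (MvPolynomial (Fin m) L)))) ∪ Set.range z) :=
  hajja_kang_linearization_general L m G ι hι Y hY hstable hfaithful haffine
end
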